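/- In the construction below, for every y ∈ X_1 the set of sections at y of elements of the first layer stabiliser St_Γ(1) equals the group ⟨S_1 ∪ {s_g|_{u_1} : g ∈ G}⟩ ≤ Aut(T_{𝔛.σ}), where S_1 is identified with its rooted automorphisms of T_{𝔛.σ} (acting on first letters, which lie in X_2). Moreover this group equals the full set of sections {γ|_y : γ ∈ Γ}. -/

import Mathlib

namespace BranchPaper

universe u

/-- Vertices at level `n` of the rooted tree defined by the sequence of alphabets `X`:
strings `x₁ ⋯ x_n` with `x_{i+1} ∈ X i` (we index alphabets from `0`). -/
abbrev Vertex (X : ℕ → Type u) (n : ℕ) : Type u := ∀ i : Fin n, X (i : ℕ)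

/-- The shifted sequence of alphabets `𝔛.σⁿ`. -/
abbrev shift (X : ℕ → Type u) (n : ℕ) : ℕ → Type u := fun k => X (n + k)

variable {X : ℕ → Type u}

/-- Compatibility of a sequence of level permutations with truncation: this is precisely
the condition for the family to define an automorphism of the rooted tree. -/
def Compat (p : ∀ n, Equiv.Perm (Vertex X n)) : Prop :=
  ∀ (n : ℕ) (v : Vertex X (n + 1)), Fin.init (p (n + 1) v) = p n (Fin.init v)

/-- The automorphism group of the rooted tree `T_X`, realised as the subgroup of
`∏ₙ Sym(L(n))` of families of layer permutations compatible with truncation. -/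
def treeAutGroup (X : ℕ → Type u) : Subgroup (∀ n, Equiv.Perm (Vertex X n)) where
  carrier := {p | Compat p}
  one_mem' := fun _ _ => rfl
  mul_mem' := by
    intro a b ha hb n v
    show Fin.init (a (n + 1) (b (n + 1) v)) = a n (b n (Fin.init v))
    rw [ha, hb]
  inv_mem' := by
    intro a ha n v
    apply (a n).injective
    show a n (Fin.init ((a (n + 1))⁻¹ v)) = a n ((a n)⁻¹ (Fin.init v))
    rw [← ha n ((a (n + 1))⁻¹ v), (show ∀ {α : Type u} (e : Equiv.Perm α) (y : α), e (e⁻¹ y) = y from fun e y => e.apply_symm_apply y), (show ∀ {α : Type u} (e : Equiv.Perm α) (y : α), e (e⁻¹ y) = y from fun e y => e.apply_symm_apply y)]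

/-- `Aut(T_X)`. -/
abbrev TreeAut (X : ℕ → Type u) := ↥(treeAutGroup X)

lemma mem_treeAutGroup {p : ∀ n, Equiv.Perm (Vertex X n)} : p ∈ treeAutGroup X ↔ Compat p :=
  Iff.rfl

lemma TreeAut.compat (g : TreeAut X) : Compat (g.1) := g.2

/-- The first `n` letters of a vertex of length `n + m`. -/
def front {n m : ℕ} (w : Vertex X (n + m)) : Vertex X n := fun i => w (Fin.castAdd m i)

/-- The last `m` letters of a vertex of length `n + m`, as a vertex of the shifted tree. -/
def back {n m : ℕ} (w : Vertex X (n + m)) : Vertex (shift X n) m := fun i => w (Fin.natAdd n i)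

/-- Concatenation of a vertex of `T_X` with a vertex of the shifted tree. -/
def append {n m : ℕ} (v : Vertex X n) (w : Vertex (shift X n) m) : Vertex X (n + m) :=
  Fin.addCases (motive := fun i => X (i : ℕ)) v w

@[simp] lemma front_append {n m : ℕ} (v : Vertex X n) (w : Vertex (shift X n) m) :
    front (append v w) = v := by
  funext i
  show Fin.addCases (motive := fun i => X (i : ℕ)) v w (Fin.castAdd m i) = v i
  exact Fin.addCases_left i

@[simp] lemma back_append {n m : ℕ} (v : Vertex X n) (w : Vertex (shift X n) m) :
    back (append v w) = w := by
  funext i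
  show Fin.addCases (motive := fun i => X (i : ℕ)) v w (Fin.natAdd n i) = w i
  exact Fin.addCases_right i

@[simp] lemma append_front_back {n m : ℕ} (w : Vertex X (n + m)) :
    append (front w) (back w) = w := by
  funext i
  induction i using Fin.addCases with
  | left i =>
      show Fin.addCases (motive := fun i => X (i : ℕ)) (front w) (back w) (Fin.castAdd m i)
        = w (Fin.castAdd m i)
      rw [Fin.addCases_left]
      rfl
  | right i =>
      show Fin.addCases (motive := fun i => X (i : ℕ)) (front w) (back w) (Fin.natAdd n i)
        = w (Fin.natAdd n i)
      rw [Fin.addCases_right]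
      rfl

lemma init_append {n m : ℕ} (v : Vertex X n) (w : Vertex (shift X n) (m + 1)) :
    Fin.init (n := n + m) (append (n := n) (m := m + 1) v w) = append v (Fin.init w) := by
  funext i
  induction i using Fin.addCases with
  | left i =>
      have h1 : Fin.addCases (motive := fun j => X (j : ℕ)) v w (Fin.castAdd (m + 1) i)
          = v i := Fin.addCases_left i
      have h2 : Fin.addCases (motive := fun j => X (j : ℕ)) v (Fin.init w) (Fin.castAdd m i)
          = v i := Fin.addCases_left i
      exact h1.trans h2.symm
  | right i =>
      have h1 : Fin.addCases (motive := fun j => X (j : ℕ)) v w (Fin.natAdd n i.castSucc)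
          = w i.castSucc := Fin.addCases_right i.castSucc
      have h2 : Fin.addCases (motive := fun j => X (j : ℕ)) v (Fin.init w) (Fin.natAdd n i)
          = Fin.init w i := Fin.addCases_right i
      exact h1.trans h2.symm

lemma front_act (g : TreeAut X) (n : ℕ) :
    ∀ (m : ℕ) (w : Vertex X (n + m)), front (g.1 (n + m) w) = g.1 n (front w) := by
  intro m
  induction m with
  | zero => intro w; rfl
  | succ m ih =>
      intro w
      calc front (g.1 (n + (m + 1)) w)
          = front (m := m) (Fin.init (n := n + m) (g.1 (n + m + 1) w)) := rfl
        _ = front (m := m) (g.1 (n + m) (Fin.init (n := n + m) w)) := by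
              rw [g.compat (n + m) w]
        _ = g.1 n (front (Fin.init (n := n + m) w)) := ih _
        _ = g.1 n (front w) := rfl

lemma coe_inv_apply (g : TreeAut X) (n : ℕ) (v : Vertex X n) :
    (g⁻¹).1 n v = (g.1 n)⁻¹ v := rfl

/-- The section `g|_v` of a tree automorphism at a vertex `v`, an automorphism of the
shifted tree, characterised by `g (v * w) = g v * (g|_v) w`. -/
def sectionAt (g : TreeAut X) {n : ℕ} (v : Vertex X n) : TreeAut (shift X n) :=
  ⟨fun m =>
    { toFun := fun w => back (g.1 (n + m) (append v w))
      invFun := fun w => back ((g⁻¹).1 (n + m) (append (g.1 n v) w))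
      left_inv := by
        intro w
        have hfront : front (g.1 (n + m) (append v w)) = g.1 n v := by
          rw [front_act, front_append]
        have key := append_front_back (g.1 (n + m) (append v w))
        rw [hfront] at key
        show back ((g⁻¹).1 (n + m) (append (g.1 n v) (back (g.1 (n + m) (append v w))))) = w
        rw [key]
        have h2 : (g⁻¹).1 (n + m) (g.1 (n + m) (append v w)) = append v w := by
          show (g.1 (n + m))⁻¹ (g.1 (n + m) (append v w)) = append v w
          exact Equiv.symm_apply_apply _ _
        rw [h2, back_append]
      right_inv := by
        intro w
        have hfront : front ((g⁻¹).1 (n + m) (append (g.1 n v) w)) = v := by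
          rw [front_act, front_append]
          show (g.1 n)⁻¹ (g.1 n v) = v
          exact Equiv.symm_apply_apply _ _
        have key := append_front_back ((g⁻¹).1 (n + m) (append (g.1 n v) w))
        rw [hfront] at key
        show back (g.1 (n + m) (append v (back ((g⁻¹).1 (n + m) (append (g.1 n v) w))))) = w
        rw [key]
        have h2 : g.1 (n + m) ((g⁻¹).1 (n + m) (append (g.1 n v) w)) = append (g.1 n v) w := by
          show g.1 (n + m) ((g.1 (n + m))⁻¹ (append (g.1 n v) w)) = append (g.1 n v) w
          exact Equiv.apply_symm_apply _ _
        rw [h2, back_append] },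
   by
    intro m w
    have h1 : Fin.init (n := n + m) (g.1 (n + m + 1) (append (n := n) (m := m + 1) v w))
        = g.1 (n + m) (Fin.init (n := n + m) (append (n := n) (m := m + 1) v w)) :=
      g.compat (n + m) (append (n := n) (m := m + 1) v w)
    calc Fin.init (back (n := n) (m := m + 1)
            (g.1 (n + (m + 1)) (append (n := n) (m := m + 1) v w)))
        = back (m := m) (Fin.init (n := n + m)
            (g.1 (n + m + 1) (append (n := n) (m := m + 1) v w))) := rfl
      _ = back (m := m) (g.1 (n + m)
            (Fin.init (n := n + m) (append (n := n) (m := m + 1) v w))) := by rw [h1]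
      _ = back (g.1 (n + m) (append v (Fin.init w))) := by rw [init_append v w]⟩

/-- An automorphism is finitary if all sections at some level are trivial. -/
def Finitary (g : TreeAut X) : Prop := ∃ n : ℕ, ∀ v : Vertex X n, sectionAt g v = 1

/-- `v` is a prefix of `w`. -/
def IsPrefixOf {n k : ℕ} (v : Vertex X n) (w : Vertex X k) : Prop :=
  ∃ h : n ≤ k, ∀ i : Fin n, w (Fin.castLE h i) = v i

/-- `g` fixes every vertex which does not have `v` as a prefix. -/
def FixesOutside (g : TreeAut X) {n : ℕ} (v : Vertex X n) : Prop :=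
  ∀ (k : ℕ) (w : Vertex X k), ¬ IsPrefixOf v w → g.1 k w = w

/-- A group of tree automorphisms acts spherically transitively if it acts transitively
on every layer. -/
def SphericallyTransitive (G : Subgroup (TreeAut X)) : Prop :=
  ∀ (n : ℕ) (v w : Vertex X n), ∃ g ∈ G, g.1 n v = w

/-- A group of tree automorphisms is layered if for every `g ∈ G` and every vertex `v`,
the insertion `ins_v (g|_v)` (the unique automorphism fixing everything outside the
subtree at `v` and with section `g|_v` at `v`) again belongs to `G`. -/
def Layered (G : Subgroup (TreeAut X)) : Prop :=
  ∀ g ∈ G, ∀ (n : ℕ) (v : Vertex X n),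
    ∃ h : TreeAut X, h ∈ G ∧ FixesOutside h v ∧ sectionAt h v = sectionAt g v

/-- The rigid vertex stabiliser of `v` in `G`. -/
def rist (G : Subgroup (TreeAut X)) {n : ℕ} (v : Vertex X n) : Subgroup (TreeAut X) where
  carrier := {g | g ∈ G ∧ FixesOutside g v}
  one_mem' := ⟨G.one_mem, fun _ _ _ => rfl⟩
  mul_mem' := by
    rintro a b ⟨haG, ha⟩ ⟨hbG, hb⟩
    refine ⟨G.mul_mem haG hbG, fun k w hw => ?_⟩
    show a.1 k (b.1 k w) = w
    rw [hb k w hw, ha k w hw]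
  inv_mem' := by
    rintro a ⟨haG, ha⟩
    refine ⟨G.inv_mem haG, fun k w hw => ?_⟩
    apply (a.1 k).injective
    show a.1 k ((a.1 k)⁻¹ w) = a.1 k w
    rw [(show ∀ {α : Type u} (e : Equiv.Perm α) (y : α), e (e⁻¹ y) = y from fun e y => e.apply_symm_apply y), ha k w hw]

/-- The rigid layer stabiliser `Rist_G(n)`, the subgroup generated by the rigid vertex
stabilisers of the vertices in layer `n`. -/
def RistL (G : Subgroup (TreeAut X)) (n : ℕ) : Subgroup (TreeAut X) :=
  Subgroup.closure (⋃ v : Vertex X n, (rist G v : Set (TreeAut X)))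

/-- A ray in the rooted tree. -/
def IsRay (u : ∀ n, Vertex X n) : Prop := ∀ n, Fin.init (u (n + 1)) = u n

/-- A `𝔲`-generalised spinal element: all sections away from the ray are finitary. -/
def GeneralisedSpinal (u : ∀ n, Vertex X n) (g : TreeAut X) : Prop :=
  ∀ (n : ℕ) (v : Vertex X n), v ≠ u n → Finitary (sectionAt g v)

section Portrait

/-- The action on layers induced by a portrait (a labelling of the vertices by
permutations of the corresponding alphabets). -/
def portraitAct (L : ∀ n, Vertex X n → Equiv.Perm (X n)) : ∀ n, Vertex X n → Vertex X n
  | 0, v => v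
  | (n + 1), v =>
      Fin.snoc (portraitAct L n (Fin.init v)) (L n (Fin.init v) (v (Fin.last n)))

lemma portraitAct_injective (L : ∀ n, Vertex X n → Equiv.Perm (X n)) :
    ∀ n, Function.Injective (portraitAct L n)
  | 0 => fun _ _ h => h
  | (n + 1) => by
      intro a b h
      simp only [portraitAct] at h
      have hinit : Fin.init a = Fin.init b := by
        apply portraitAct_injective L n
        have := congrArg Fin.init h
        simpa [Fin.init_snoc] using this
      have hlast : a (Fin.last n) = b (Fin.last n) := by
        have h2 := congrFun h (Fin.last n)
        rw [Fin.snoc_last, Fin.snoc_last, hinit] at h2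
        exact (L n (Fin.init b)).injective h2
      calc a = Fin.snoc (Fin.init a) (a (Fin.last n)) := (Fin.snoc_init_self a).symm
        _ = Fin.snoc (Fin.init b) (b (Fin.last n)) := by rw [hinit, hlast]
        _ = b := Fin.snoc_init_self b

/-- The tree automorphism determined by a portrait. -/
noncomputable def ofPortrait [∀ k, Finite (X k)] (L : ∀ n, Vertex X n → Equiv.Perm (X n)) :
    TreeAut X :=
  ⟨fun n => Equiv.ofBijective (portraitAct L n)
      (Finite.injective_iff_bijective.mp (portraitAct_injective L n)),
   by
    intro n v
    show Fin.init (portraitAct L (n + 1) v) = portraitAct L n (Fin.init v)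
    simp [portraitAct, Fin.init_snoc]⟩

end Portrait

section Construction

variable (S : ℕ → Type u)

/-- The spinal automorphism determined by a sequence `c` of group elements: it has the
rooted permutation induced by `c k` at the vertex `u_k x_{k+1}` and trivial label
everywhere else. -/
noncomputable def spinalAut [∀ k, Finite (X k)] [∀ n, Group (S n)]
    [∀ n, MulAction (S n) (X n)] (u : ∀ n, Vertex X n) (x : ∀ n, X n)
    (c : ∀ n, S (n + 1)) : TreeAut X :=
  ofPortrait (fun n => match n with
    | 0 => fun _ => 1
    | (k + 1) => fun v =>
        haveI := Classical.propDecidable (v = Fin.snoc (u k) (x k))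
        if v = Fin.snoc (u k) (x k) then MulAction.toPerm (c k) else 1)

/-- The rooted automorphism induced by an element acting on the first alphabet. -/
noncomputable def rootedAut (X : ℕ → Type u) [∀ k, Finite (X k)] {R : Type*} [Group R]
    [MulAction R (X 0)] (s : R) : TreeAut X :=
  ofPortrait (fun n => match n with
    | 0 => fun _ => MulAction.toPerm s
    | (_ + 1) => fun _ => 1)

/-- The group `Fin_𝔖(T)` of finitary automorphisms all of whose labels lie in the images
of the groups `S n` acting on the alphabets, described as a set. -/
def finSet (X : ℕ → Type u) (S : ℕ → Type u) [∀ n, Group (S n)]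
    [∀ n, MulAction (S n) (X n)] : Set (TreeAut X) :=
  {g | Finitary g ∧ ∀ (n : ℕ) (v : Vertex X n), ∃ s : S n, ∀ y : X n,
      g.1 (n + 1) (Fin.snoc v y) (Fin.last n) = s • y}

variable {G : Type u} [Group G]

/-- The branch group `Γ` of the construction. -/
noncomputable def gammaGroup [∀ k, Finite (X k)] [∀ n, Group (S n)]
    [∀ n, MulAction (S n) (X n)] (φ : G →* ∀ n, S (n + 1))
    (u : ∀ n, Vertex X n) (x : ∀ n, X n) : Subgroup (TreeAut X) :=
  Subgroup.closure
    (Set.range (fun s : S 0 => rootedAut X s) ∪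
     Set.range (fun g : G => spinalAut S u x (fun n => φ g n)))

/-- The subgroup `Δ(H) = ⟨Fin_𝔖(T) ∪ {s_h : h ∈ H}⟩`. -/
noncomputable def deltaGroup [∀ k, Finite (X k)] [∀ n, Group (S n)]
    [∀ n, MulAction (S n) (X n)] (φ : G →* ∀ n, S (n + 1))
    (u : ∀ n, Vertex X n) (x : ∀ n, X n) (H : Subgroup G) : Subgroup (TreeAut X) :=
  Subgroup.closure
    (finSet X S ∪ ((fun g : G => spinalAut S u x (fun n => φ g n)) '' (H : Set G)))

end Construction

section Aux

variable {X : ℕ → Type u}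

lemma append_nil {n : ℕ} (v : Vertex X n) (w : Vertex (shift X n) 0) :
    append v w = v := by
  funext i
  exact Fin.addCases_left (motive := fun j : Fin (n + 0) => X (j : ℕ)) ⟨i.1, i.2⟩

lemma append_apply_zero {m : ℕ} (y : Vertex X 1) (w : Vertex (shift X 1) m)
    (h : 0 < 1 + m) :
    append y w ⟨0, h⟩ = y ⟨0, Nat.one_pos⟩ :=
  Fin.addCases_left (motive := fun j : Fin (1 + m) => X (j : ℕ)) ⟨0, Nat.one_pos⟩

lemma append_snoc {n m : ℕ} (v : Vertex X n) (w : Vertex (shift X n) m)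
    (a : shift X n m) :
    append v (Fin.snoc w a) = Fin.snoc (append v w) a := by
  funext i
  induction i using Fin.lastCases with
  | last =>
      have h1 : append v (Fin.snoc w a : Vertex (shift X n) (m + 1))
            (Fin.natAdd n (Fin.last m))
          = (Fin.snoc w a : Vertex (shift X n) (m + 1)) (Fin.last m) :=
        Fin.addCases_right (motive := fun j : Fin (n + (m + 1)) => X (j : ℕ))
          (left := v) (right := (Fin.snoc w a : Vertex (shift X n) (m + 1))) (Fin.last m)
      have h2 : (Fin.snoc w a : Vertex (shift X n) (m + 1)) (Fin.last m) = a :=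
        Fin.snoc_last _ _
      have h3 : (Fin.snoc (append v w) a : Vertex X (n + m + 1)) (Fin.last (n + m)) = a :=
        Fin.snoc_last _ _
      exact (h1.trans h2).trans h3.symm
  | cast j =>
      have h3 : (Fin.snoc (append v w) a : Vertex X (n + m + 1)) (Fin.castSucc j)
          = append v w j := Fin.snoc_castSucc _ _ _
      induction j using Fin.addCases with
      | left j1 =>
          have h1 : append v (Fin.snoc w a : Vertex (shift X n) (m + 1))
                (Fin.castAdd (m + 1) j1)
              = v j1 :=
            Fin.addCases_left (motive := fun j : Fin (n + (m + 1)) => X (j : ℕ))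
              (left := v) (right := (Fin.snoc w a : Vertex (shift X n) (m + 1))) j1
          have h2 : append v w (Fin.castAdd m j1) = v j1 :=
            Fin.addCases_left (motive := fun j : Fin (n + m) => X (j : ℕ))
              (left := v) (right := w) j1
          exact h1.trans (h2.symm.trans h3.symm)
      | right j2 =>
          have h1 : append v (Fin.snoc w a : Vertex (shift X n) (m + 1))
                (Fin.natAdd n (Fin.castSucc j2))
              = (Fin.snoc w a : Vertex (shift X n) (m + 1)) (Fin.castSucc j2) :=
            Fin.addCases_right (motive := fun j : Fin (n + (m + 1)) => X (j : ℕ))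
              (left := v) (right := (Fin.snoc w a : Vertex (shift X n) (m + 1)))
              (Fin.castSucc j2)
          have h2 : (Fin.snoc w a : Vertex (shift X n) (m + 1)) (Fin.castSucc j2) = w j2 :=
            Fin.snoc_castSucc _ _ _
          have h4 : append v w (Fin.natAdd n j2) = w j2 :=
            Fin.addCases_right (motive := fun j : Fin (n + m) => X (j : ℕ))
              (left := v) (right := w) j2
          exact (h1.trans h2).trans (h4.symm.trans h3.symm)

lemma sectionAt_apply (g : TreeAut X) {n : ℕ} (v : Vertex X n) (m : ℕ)
    (w : Vertex (shift X n) m) :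
    (sectionAt g v).1 m w = back (g.1 (n + m) (append v w)) := rfl

lemma sectionAt_one {n : ℕ} (v : Vertex X n) :
    sectionAt (1 : TreeAut X) v = 1 := by
  apply Subtype.ext
  funext m
  apply Equiv.ext
  intro w
  exact back_append v w

lemma sectionAt_mul (a b : TreeAut X) {n : ℕ} (v : Vertex X n) :
    sectionAt (a * b) v = sectionAt a (b.1 n v) * sectionAt b v := by
  apply Subtype.ext
  funext m
  apply Equiv.ext
  intro w
  have hf : front (b.1 (n + m) (append v w)) = b.1 n v := by
    rw [front_act, front_append]
  have key := append_front_back (b.1 (n + m) (append v w))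
  rw [hf] at key
  show back (a.1 (n + m) (b.1 (n + m) (append v w)))
      = back (a.1 (n + m) (append (b.1 n v) (back (b.1 (n + m) (append v w)))))
  rw [key]

lemma sectionAt_inv_apply (g : TreeAut X) {n : ℕ} (v : Vertex X n) :
    sectionAt g⁻¹ (g.1 n v) = (sectionAt g v)⁻¹ := by
  have h := sectionAt_mul g⁻¹ g v
  rw [inv_mul_cancel, sectionAt_one] at h
  exact eq_inv_of_mul_eq_one_left h.symm

lemma portraitAct_append (L : ∀ n, Vertex X n → Equiv.Perm (X n)) {n : ℕ}
    (v : Vertex X n) :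
    ∀ (m : ℕ) (w : Vertex (shift X n) m),
      portraitAct L (n + m) (append v w)
        = append (portraitAct L n v)
            (portraitAct (fun k w' => L (n + k) (append v w')) m w) := by
  intro m
  induction m with
  | zero =>
      intro w
      show portraitAct L n (append v w)
        = append (portraitAct L n v) w
      rw [append_nil v w, append_nil]
  | succ m ih =>
      intro w
      have hlast : append (n := n) (m := m + 1) v w (Fin.last (n + m)) = w (Fin.last m) :=
        Fin.addCases_right (motive := fun j : Fin (n + (m + 1)) => X (j : ℕ))
          (left := v) (right := w) (Fin.last m)
      calc portraitAct L (n + (m + 1)) (append (n := n) (m := m + 1) v w)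
          = Fin.snoc
              (portraitAct L (n + m) (Fin.init (n := n + m) (append (n := n) (m := m + 1) v w)))
              (L (n + m) (Fin.init (n := n + m) (append (n := n) (m := m + 1) v w))
                (append (n := n) (m := m + 1) v w (Fin.last (n + m)))) := rfl
        _ = Fin.snoc (portraitAct L (n + m) (append v (Fin.init w)))
              (L (n + m) (append v (Fin.init w)) (w (Fin.last m))) := by
              rw [init_append v w, hlast]
        _ = Fin.snoc
              (append (portraitAct L n v)
                (portraitAct (fun k w' => L (n + k) (append v w')) m (Fin.init w)))
              (L (n + m) (append v (Fin.init w)) (w (Fin.last m))) := by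
              rw [ih (Fin.init w)]
        _ = append (portraitAct L n v)
              (Fin.snoc (portraitAct (fun k w' => L (n + k) (append v w')) m (Fin.init w))
                ((fun k w' => L (n + k) (append v w')) m (Fin.init w) (w (Fin.last m)))) :=
              (append_snoc _ _ _).symm
        _ = append (portraitAct L n v)
              (portraitAct (fun k w' => L (n + k) (append v w')) (m + 1) w) := rfl

lemma sectionAt_ofPortrait [∀ k, Finite (X k)] (L : ∀ n, Vertex X n → Equiv.Perm (X n))
    {n : ℕ} (v : Vertex X n) :
    sectionAt (ofPortrait L) v
      = ofPortrait (fun k (w : Vertex (shift X n) k) => L (n + k) (append v w)) := by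
  apply Subtype.ext
  funext m
  apply Equiv.ext
  intro w
  show back (portraitAct L (n + m) (append v w))
    = portraitAct (fun k w' => L (n + k) (append v w')) m w
  rw [portraitAct_append, back_append]

lemma ofPortrait_congr [∀ k, Finite (X k)] {L L' : ∀ n, Vertex X n → Equiv.Perm (X n)}
    (h : ∀ n v, L n v = L' n v) : ofPortrait L = ofPortrait L' :=
  congrArg _ (funext fun n => funext (h n))

lemma ofPortrait_eq_one [∀ k, Finite (X k)] {L : ∀ n, Vertex X n → Equiv.Perm (X n)}
    (h : ∀ n v, L n v = 1) : ofPortrait L = 1 := by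
  apply Subtype.ext
  funext n
  apply Equiv.ext
  intro v
  show portraitAct L n v = v
  induction n with
  | zero => rfl
  | succ n ih =>
      show Fin.snoc (portraitAct L n (Fin.init v)) (L n (Fin.init v) (v (Fin.last n))) = v
      rw [h n (Fin.init v), ih]
      show Fin.snoc (Fin.init v) (v (Fin.last n)) = v
      exact Fin.snoc_init_self v

lemma vertex_one_ext {a b : Vertex X 1} (h : a ⟨0, Nat.one_pos⟩ = b ⟨0, Nat.one_pos⟩) :
    a = b := by
  funext i
  have : i = (⟨0, Nat.one_pos⟩ : Fin 1) := Subsingleton.elim _ _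
  rw [this]
  exact h

lemma ray_apply_zero {u : ∀ n, Vertex X n} (hu : IsRay u) (j : ℕ) (h : 0 < j) :
    u j ⟨0, h⟩ = u 1 ⟨0, Nat.one_pos⟩ := by
  induction j with
  | zero => exact absurd h (lt_irrefl 0)
  | succ j ih =>
      rcases Nat.eq_zero_or_pos j with h0 | hp
      · subst h0; rfl
      · have h2 : u (j + 1) ⟨0, h⟩ = u j ⟨0, hp⟩ := by
          rw [← hu j]; rfl
        exact h2.trans (ih hp)

lemma snoc_ray_apply_zero {u : ∀ n, Vertex X n} (hu : IsRay u) {x : ∀ n, X n}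
    (j : ℕ) (hj : 0 < j) (h : 0 < j + 1) :
    (Fin.snoc (u j) (x j) : Vertex X (j + 1)) ⟨0, h⟩ = u 1 ⟨0, Nat.one_pos⟩ := by
  have h1 : (Fin.snoc (u j) (x j) : Vertex X (j + 1)) (Fin.castSucc ⟨0, hj⟩)
      = u j ⟨0, hj⟩ := Fin.snoc_castSucc _ _ _
  exact h1.trans (ray_apply_zero hu j hj)

section SpinalComp

variable [∀ k, Finite (X k)] {S : ℕ → Type u} [∀ n, Group (S n)]
  [∀ n, MulAction (S n) (X n)] {u : ∀ n, Vertex X n} {x : ∀ n, X n}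

lemma ofPortrait_apply_one_level (L : ∀ n, Vertex X n → Equiv.Perm (X n))
    (h1 : ∀ v0 : Vertex X 0, L 0 v0 = 1) (w : Vertex X 1) :
    (ofPortrait L).1 1 w = w := by
  show Fin.snoc (portraitAct L 0 (Fin.init w)) (L 0 (Fin.init w) (w (Fin.last 0))) = w
  rw [h1]
  exact Fin.snoc_init_self w

lemma ofPortrait_apply_one_zero (L : ∀ n, Vertex X n → Equiv.Perm (X n))
    (w : Vertex X 1) (h : 0 < 1) :
    (ofPortrait L).1 1 w ⟨0, h⟩ = L 0 (Fin.init w) (w ⟨0, h⟩) := by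
  show (Fin.snoc (portraitAct L 0 (Fin.init w))
      (L 0 (Fin.init w) (w (Fin.last 0))) : Vertex X 1) ⟨0, h⟩
    = L 0 (Fin.init w) (w ⟨0, h⟩)
  exact Fin.snoc_last _ _

lemma sectionAt_rootedAut {R : Type*} [Group R] [MulAction R (X 0)] (s : R)
    (y : Vertex X 1) : sectionAt (rootedAut X s) y = 1 := by
  refine (sectionAt_ofPortrait _ y).trans (ofPortrait_eq_one ?_)
  intro k w
  cases k with
  | zero => rfl
  | succ k => rfl

lemma rootedAut_apply_one {R : Type*} [Group R] [MulAction R (X 0)] (s : R)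
    (w : Vertex X 1) (h : 0 < 1) :
    (rootedAut X s).1 1 w ⟨0, h⟩ = s • w ⟨0, h⟩ :=
  ofPortrait_apply_one_zero _ w h

lemma spinalAut_fixes_one (c : ∀ n, S (n + 1)) (w : Vertex X 1) :
    (spinalAut S u x c).1 1 w = w :=
  ofPortrait_apply_one_level _ (fun _ => rfl) w

lemma sectionAt_spinalAut_spine (hu : IsRay u) (hx0 : Fin.snoc (u 0) (x 0) ≠ u 1)
    (c : ∀ n, S (n + 1)) :
    sectionAt (spinalAut S u x c) (Fin.snoc (u 0) (x 0) : Vertex X 1)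
      = rootedAut (shift X 1) (c 0) := by
  refine (sectionAt_ofPortrait _ _).trans (ofPortrait_congr ?_)
  intro k w
  cases k with
  | zero =>
      show (@ite _ (append (Fin.snoc (u 0) (x 0) : Vertex X 1) w
            = (Fin.snoc (u 0) (x 0) : Vertex X 1)) (Classical.propDecidable _)
          (MulAction.toPerm (c 0)) 1) = MulAction.toPerm (c 0)
      exact if_pos (append_nil _ w)
  | succ k =>
      show (@ite _ (append (Fin.snoc (u 0) (x 0) : Vertex X 1) w
            = (Fin.snoc (u (1 + k)) (x (1 + k)) : Vertex X (1 + k + 1)))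
          (Classical.propDecidable _) (MulAction.toPerm (c (1 + k))) 1) = 1
      refine if_neg (fun heq => hx0 (vertex_one_ext ?_))
      have h1 := congrFun heq ⟨0, by omega⟩
      rw [append_apply_zero] at h1
      exact h1.trans (snoc_ray_apply_zero hu (1 + k) (by omega) (by omega))

lemma sectionAt_spinalAut_other (hu : IsRay u) (c : ∀ n, S (n + 1)) (y : Vertex X 1)
    (hy1 : y ≠ u 1) (hy0 : y ≠ Fin.snoc (u 0) (x 0)) :
    sectionAt (spinalAut S u x c) y = 1 := by
  refine (sectionAt_ofPortrait _ y).trans (ofPortrait_eq_one ?_)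
  intro k w
  cases k with
  | zero =>
      show (@ite _ (append y w = (Fin.snoc (u 0) (x 0) : Vertex X 1))
          (Classical.propDecidable _) (MulAction.toPerm (c 0)) 1) = 1
      exact if_neg (fun heq => hy0 ((append_nil y w).symm.trans heq))
  | succ k =>
      show (@ite _ (append y w = (Fin.snoc (u (1 + k)) (x (1 + k)) : Vertex X (1 + k + 1)))
          (Classical.propDecidable _) (MulAction.toPerm (c (1 + k))) 1) = 1
      refine if_neg (fun heq => hy1 (vertex_one_ext ?_))
      have h1 := congrFun heq ⟨0, by omega⟩
      rw [append_apply_zero] at h1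
      exact h1.trans (snoc_ray_apply_zero hu (1 + k) (by omega) (by omega))

end SpinalComp

end Aux


/-- The first-level sections of the first layer stabiliser of `Γ`, at any vertex `y` of
the first layer, form the group `⟨S₁ ∪ {s_g|_{u₁} : g ∈ G}⟩`, which also coincides with
the set of all sections of elements of `Γ` at `y`. -/
theorem statement7
    (X : ℕ → Type) [∀ n, Finite (X n)] (hX2 : ∀ n, 2 ≤ Nat.card (X n))
    (S : ℕ → Type) [∀ n, Group (S n)] [∀ n, Finite (S n)] [∀ n, MulAction (S n) (X n)]
    (hSnt : ∀ n, Nontrivial (S n))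
    (hSperf : ∀ n, commutator (S n) = ⊤)
    (hfaith : ∀ (n : ℕ) (s : S n), (∀ y : X n, s • y = y) → s = 1)
    (htrans : ∀ (n : ℕ) (a b : X n), ∃ s : S n, s • a = b)
    (hnonreg : ∀ n : ℕ, ∃ (s : S n) (y : X n), s ≠ 1 ∧ s • y = y)
    (G : Type) [Group G] (φ : G →* ∀ n, S (n + 1))
    (hφinj : Function.Injective φ)
    (hφsub : ∀ n, Function.Surjective (fun g : G => φ g n))
    (hφinf : ∀ g : G, {n : ℕ | φ g n ≠ 1}.Finite → g = 1)
    (u : ∀ n, Vertex X n) (hu : IsRay u)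
    (x : ∀ n, X n) (hx : ∀ n, Fin.snoc (u n) (x n) ≠ u (n + 1))
    (hstab : ∀ n, MulAction.stabilizer (S n) (x n)
      ≠ MulAction.stabilizer (S n) (show X n from u (n + 1) (Fin.last n))) :
    ∀ y : Vertex X 1,
      ({h : TreeAut (shift X 1) | ∃ γ : TreeAut X, γ ∈ gammaGroup S φ u x ∧
          (∀ w : Vertex X 1, γ.1 1 w = w) ∧ sectionAt γ y = h}
        = (Subgroup.closure
            ((Set.range fun s : S 1 => rootedAut (shift X 1) s) ∪
             (Set.range fun g : G =>
                sectionAt (spinalAut S u x (fun n => φ g n)) (u 1))) :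
            Set (TreeAut (shift X 1)))) ∧
      ({h : TreeAut (shift X 1) | ∃ γ : TreeAut X, γ ∈ gammaGroup S φ u x ∧
          sectionAt γ y = h}
        = (Subgroup.closure
            ((Set.range fun s : S 1 => rootedAut (shift X 1) s) ∪
             (Set.range fun g : G =>
                sectionAt (spinalAut S u x (fun n => φ g n)) (u 1))) :
            Set (TreeAut (shift X 1)))) := by
  intro y
  set Δ : Subgroup (TreeAut (shift X 1)) := Subgroup.closure
      ((Set.range fun s : S 1 => rootedAut (shift X 1) s) ∪
       (Set.range fun g : G =>
          sectionAt (spinalAut S u x (fun n => φ g n)) (u 1))) with hΔ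
  -- Step 1: every section of every element of Γ lies in Δ.
  have step1 : ∀ γ ∈ gammaGroup S φ u x, ∀ z : Vertex X 1, sectionAt γ z ∈ Δ := by
    intro γ hγ
    have hγ' : γ ∈ Subgroup.closure
        (Set.range (fun s : S 0 => rootedAut X s) ∪
         Set.range (fun g : G => spinalAut S u x (fun n => φ g n))) := hγ
    refine Subgroup.closure_induction
      (p := fun γ _ => ∀ z : Vertex X 1, sectionAt γ z ∈ Δ) ?_ ?_ ?_ ?_ hγ'
    · rintro γ0 (⟨s, rfl⟩ | ⟨g, rfl⟩) z
      · rw [sectionAt_rootedAut]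
        exact one_mem Δ
      · by_cases hz1 : z = u 1
        · subst hz1
          rw [hΔ]
          exact Subgroup.subset_closure (Or.inr ⟨g, rfl⟩)
        · by_cases hz0 : z = Fin.snoc (u 0) (x 0)
          · subst hz0
            rw [sectionAt_spinalAut_spine hu (hx 0) (fun n => φ g n), hΔ]
            exact Subgroup.subset_closure (Or.inl ⟨φ g 0, rfl⟩)
          · rw [sectionAt_spinalAut_other hu _ z hz1 hz0]
            exact one_mem Δ
    · intro z
      rw [sectionAt_one]
      exact one_mem Δ
    · intro a b _ _ ha hb z
      rw [sectionAt_mul]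
      exact mul_mem (ha _) (hb _)
    · intro a _ ha z
      have h1 : a.1 1 ((a⁻¹).1 1 z) = z := by
        show a.1 1 ((a.1 1)⁻¹ z) = z
        exact Equiv.apply_symm_apply _ _
      rw [← h1, sectionAt_inv_apply]
      exact inv_mem (ha _)
  -- the subgroup of sections at `y` of elements of the layer stabiliser
  let TT : Subgroup (TreeAut (shift X 1)) :=
    { carrier := {h | ∃ γ : TreeAut X, γ ∈ gammaGroup S φ u x ∧
        (∀ w : Vertex X 1, γ.1 1 w = w) ∧ sectionAt γ y = h}
      one_mem' := ⟨1, one_mem _, fun _ => rfl, sectionAt_one y⟩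
      mul_mem' := by
        rintro a b ⟨γ, hγ, hfγ, rfl⟩ ⟨δ, hδ, hfδ, rfl⟩
        refine ⟨γ * δ, mul_mem hγ hδ, fun w => ?_, ?_⟩
        · show γ.1 1 (δ.1 1 w) = w
          rw [hfδ w, hfγ w]
        · rw [sectionAt_mul, hfδ y]
      inv_mem' := by
        rintro a ⟨γ, hγ, hfγ, rfl⟩
        refine ⟨γ⁻¹, inv_mem hγ, fun w => ?_, ?_⟩
        · show (γ.1 1)⁻¹ w = w
          conv_lhs => rw [← hfγ w]
          exact Equiv.symm_apply_apply _ _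
        · have h2 := sectionAt_inv_apply γ y
          rw [hfγ y] at h2
          exact h2 }
  -- Step 2: Δ is contained in TT.
  have step2 : Δ ≤ TT := by
    rw [hΔ]
    refine (Subgroup.closure_le TT).mpr ?_
    rintro h (⟨s, rfl⟩ | ⟨g, rfl⟩)
    · -- a rooted generator of Δ
      obtain ⟨g, hg⟩ := hφsub 0 s
      obtain ⟨t, ht⟩ := htrans 0 (y ⟨0, Nat.one_pos⟩) (x 0)
      have hv0 : (Fin.snoc (u 0) (x 0) : Vertex X 1) ⟨0, Nat.one_pos⟩ = x 0 :=
        Fin.snoc_last _ _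
      have hρy : (rootedAut X t).1 1 y = (Fin.snoc (u 0) (x 0) : Vertex X 1) := by
        apply vertex_one_ext
        rw [rootedAut_apply_one, hv0]
        exact ht
      refine ⟨(rootedAut X t)⁻¹ * spinalAut S u x (fun n => φ g n) * rootedAut X t,
        ?_, ?_, ?_⟩
      · exact mul_mem (mul_mem (inv_mem (Subgroup.subset_closure (Or.inl ⟨t, rfl⟩)))
          (Subgroup.subset_closure (Or.inr ⟨g, rfl⟩)))
          (Subgroup.subset_closure (Or.inl ⟨t, rfl⟩))
      · intro w
        show ((rootedAut X t)⁻¹).1 1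
            ((spinalAut S u x (fun n => φ g n)).1 1 ((rootedAut X t).1 1 w)) = w
        rw [spinalAut_fixes_one]
        show ((rootedAut X t).1 1)⁻¹ ((rootedAut X t).1 1 w) = w
        exact Equiv.symm_apply_apply _ _
      · have e2 : sectionAt ((rootedAut X t)⁻¹) (Fin.snoc (u 0) (x 0) : Vertex X 1) = 1 := by
          rw [← hρy, sectionAt_inv_apply, sectionAt_rootedAut, inv_one]
        rw [sectionAt_mul, hρy, sectionAt_rootedAut, mul_one, sectionAt_mul,
          spinalAut_fixes_one, sectionAt_spinalAut_spine hu (hx 0), e2, one_mul]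
        have hg' : φ g 0 = s := hg
        rw [hg']
    · -- a spinal generator of Δ
      obtain ⟨t, ht⟩ := htrans 0 (y ⟨0, Nat.one_pos⟩) (u 1 ⟨0, Nat.one_pos⟩)
      have hρy : (rootedAut X t).1 1 y = u 1 := by
        apply vertex_one_ext
        rw [rootedAut_apply_one]
        exact ht
      refine ⟨(rootedAut X t)⁻¹ * spinalAut S u x (fun n => φ g n) * rootedAut X t,
        ?_, ?_, ?_⟩
      · exact mul_mem (mul_mem (inv_mem (Subgroup.subset_closure (Or.inl ⟨t, rfl⟩)))
          (Subgroup.subset_closure (Or.inr ⟨g, rfl⟩)))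
          (Subgroup.subset_closure (Or.inl ⟨t, rfl⟩))
      · intro w
        show ((rootedAut X t)⁻¹).1 1
            ((spinalAut S u x (fun n => φ g n)).1 1 ((rootedAut X t).1 1 w)) = w
        rw [spinalAut_fixes_one]
        show ((rootedAut X t).1 1)⁻¹ ((rootedAut X t).1 1 w) = w
        exact Equiv.symm_apply_apply _ _
      · have e2 : sectionAt ((rootedAut X t)⁻¹) (u 1) = 1 := by
          rw [← hρy, sectionAt_inv_apply, sectionAt_rootedAut, inv_one]
        rw [sectionAt_mul, hρy, sectionAt_rootedAut, mul_one, sectionAt_mul,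
          spinalAut_fixes_one, e2, one_mul]
  constructor
  · ext h
    simp only [Set.mem_setOf_eq, SetLike.mem_coe]
    constructor
    · rintro ⟨γ, hγ, _, rfl⟩
      exact step1 γ hγ y
    · intro hh
      exact step2 hh
  · ext h
    simp only [Set.mem_setOf_eq, SetLike.mem_coe]
    constructor
    · rintro ⟨γ, hγ, rfl⟩
      exact step1 γ hγ y
    · intro hh
      obtain ⟨γ, h1, _, h3⟩ := step2 hh
      exact ⟨γ, h1, h3⟩

end BranchPaper
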